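/- Let $(X, d, \mu)$ be a compact metric space equipped with a good measure $\mu$ (a Borel measure with no atoms assigning positive mass to every nonempty open set and with $0 < \mu(X) < \infty$). Suppose that for $\mu \times \mu \times \mathrm{Leb}$-almost every triple $(x, y, U)$ with $U \in [0,1]$, setting $r = U d(x,y)$ and $\bar{r} = d(x,y) - r$, there exists $z \in X$ with $d(x,z) = r$, $d(z,y) = \bar{r}$. Then $(X,d)$ is a geodesic metric space. -/

import Mathlib

/-!
Call `(x, y, t)` good if some `z` lies at distance `t·d(x,y)` from `x` and `(1-t)·d(x,y)` from
`y`. By compactness of `X` the good triples form a closed set; being of full measure, it contains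
the support of `μ ⊗ μ ⊗ Leb|[0,1]`, which is all of `X × X × [0,1]`. Iterating the resulting
"intermediate points" property gives, for each `N`, a chain `x = q₀, …, q_N = y` with
`d(q_j, q_k) = |j - k|·d(x,y)/N`; sampled at `⌊N s / d(x,y)⌋` it is a `2 d(x,y)/N`-approximate
geodesic, and a cluster point of these curves in the compact space `ℝ → X` is a geodesic.
-/

open MeasureTheory Filter Topology Set

lemma MeasureTheory.Measure.mk_mem_support_prod {α β : Type*} [TopologicalSpace α]
    [MeasurableSpace α] [TopologicalSpace β] [MeasurableSpace β] {μ : Measure α}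
    {ν : Measure β} [SFinite ν] {a : α} {b : β} (ha : a ∈ μ.support)
    (hb : b ∈ ν.support) :
    (a, b) ∈ (μ.prod ν).support := by
  rw [mem_support_iff_forall] at ha hb ⊢
  intro U hU
  obtain ⟨u, hu, v, hv, huv⟩ := mem_nhds_prod_iff.1 hU
  calc 0 < μ u * ν v := ENNReal.mul_pos (ha u hu).ne' (hb v hv).ne'
    _ = μ.prod ν (u ×ˢ v) := (prod_prod u v).symm
    _ ≤ μ.prod ν U := measure_mono huv

lemma Real.Icc_subset_support_volume_restrict {a b : ℝ} (hab : a < b) :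
    Icc a b ⊆ (volume.restrict (Icc a b)).support := by
  have hIoo : Ioo a b ⊆ (volume.restrict (Icc a b)).support := by
    simpa [Measure.support_eq_univ] using
      Measure.interior_inter_support (μ := volume) (s := Icc a b)
  simpa [closure_Ioo hab.ne] using Measure.isClosed_support.closure_subset_iff.2 hIoo

lemma isClosed_setOf_exists_dist_eq {X : Type*} [PseudoMetricSpace X] [CompactSpace X] :
    IsClosed {p : X × X × ℝ | ∃ z, dist p.1 z = p.2.2 * dist p.1 p.2.1 ∧
      dist z p.2.1 = dist p.1 p.2.1 - p.2.2 * dist p.1 p.2.1} := by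
  have hclosed : IsClosed {q : (X × X × ℝ) × X |
      dist q.1.1 q.2 = q.1.2.2 * dist q.1.1 q.1.2.1 ∧
        dist q.2 q.1.2.1 = dist q.1.1 q.1.2.1 - q.1.2.2 * dist q.1.1 q.1.2.1} :=
    (isClosed_eq (by fun_prop) (by fun_prop)).inter (isClosed_eq (by fun_prop) (by fun_prop))
  convert isClosedMap_fst_of_compactSpace _ hclosed using 1
  ext p
  simp

lemma exists_dist_eq_mul_of_ae {X : Type*} [PseudoMetricSpace X] [CompactSpace X]
    [MeasurableSpace X] (μ : Measure X) [SFinite μ] [μ.IsOpenPosMeasure]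
    (hmid : ∀ᵐ p ∂(μ.prod (μ.prod (volume.restrict (Icc (0:ℝ) 1)))),
      ∃ z : X, dist p.1 z = p.2.2 * dist p.1 p.2.1 ∧
        dist z p.2.1 = dist p.1 p.2.1 - p.2.2 * dist p.1 p.2.1)
    (x y : X) (t : ℝ) (ht : t ∈ Icc (0:ℝ) 1) :
    ∃ z, dist x z = t * dist x y ∧ dist z y = dist x y - t * dist x y := by
  have hsupp : (x, y, t) ∈ (μ.prod (μ.prod (volume.restrict (Icc (0:ℝ) 1)))).support := by
    refine Measure.mk_mem_support_prod ?_ (Measure.mk_mem_support_prod ?_ ?_)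
    · simp [Measure.support_eq_univ]
    · simp [Measure.support_eq_univ]
    · exact Real.Icc_subset_support_volume_restrict zero_lt_one ht
  exact Measure.support_subset_of_isClosed isClosed_setOf_exists_dist_eq hmid hsupp

lemma exists_dist_eq_sub_of_forall_mul {X : Type*} [PseudoMetricSpace X]
    (h : ∀ x y : X, ∀ t ∈ Icc (0:ℝ) 1,
      ∃ z, dist x z = t * dist x y ∧ dist z y = dist x y - t * dist x y)
    (x y : X) (r : ℝ) (hr : r ∈ Icc 0 (dist x y)) :
    ∃ z, dist x z = r ∧ dist z y = dist x y - r := by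
  rcases hr.1.eq_or_lt with rfl | hr₀
  · exact ⟨x, dist_self x, by rw [sub_zero]⟩
  have hd : 0 < dist x y := hr₀.trans_le hr.2
  obtain ⟨z, hxz, hzy⟩ :=
    h x y (r / dist x y) ⟨by positivity, div_le_one_of_le₀ hr.2 hd.le⟩
  rw [div_mul_cancel₀ _ hd.ne'] at hxz hzy
  exact ⟨z, hxz, hzy⟩

section Chain

variable {X : Type*} [PseudoMetricSpace X]

lemma dist_eq_abs_sub_mul_of_dist_succ_eq {q : ℕ → X} {y : X} {N : ℕ} {δ : ℝ}
    (hstep : ∀ k < N, dist (q k) (q (k + 1)) = δ) (hy : ∀ k ≤ N, dist (q k) y = (N - k) * δ)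
    {j k : ℕ} (hj : j ≤ N) (hk : k ≤ N) : dist (q j) (q k) = |(j : ℝ) - k| * δ := by
  wlog hjk : j ≤ k generalizing j k
  · rw [dist_comm, abs_sub_comm]
    exact this hk hj (le_of_not_ge hjk)
  rw [abs_sub_comm, abs_of_nonneg (by simpa using hjk)]
  apply le_antisymm
  · calc dist (q j) (q k) ≤ ∑ i ∈ Finset.Ico j k, dist (q i) (q (i + 1)) :=
          dist_le_Ico_sum_dist q hjk
      _ = (k - j) * δ := by
          rw [Finset.sum_congr rfl fun i hi => hstep i ((Finset.mem_Ico.1 hi).2.trans_le hk)]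
          simp [Nat.cast_sub hjk]
  · -- the distances to `y` force equality in the triangle inequality `j → k → y`
    have := dist_triangle (q j) (q k) y
    rw [hy j hj, hy k hk] at this
    linarith

lemma exists_chain_of_forall_dist_eq_sub
    (hseg : ∀ x y : X, ∀ r ∈ Icc 0 (dist x y),
      ∃ z, dist x z = r ∧ dist z y = dist x y - r)
    (x y : X) {N : ℕ} (hN : 0 < N) :
    ∃ q : ℕ → X, q 0 = x ∧ (∀ k < N, dist (q k) (q (k + 1)) = dist x y / N) ∧
      ∀ k ≤ N, dist (q k) y = (N - k) * (dist x y / N) := by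
  choose! w hw using hseg
  set δ := dist x y / N
  have hmem : ∀ p k, k < N → dist p y = (N - k) * δ → δ ∈ Icc 0 (dist p y) := by
    intro p k hk hp
    have : (1 : ℝ) ≤ N - k := by
      have : (k : ℝ) + 1 ≤ N := by exact_mod_cast hk
      linarith
    rw [hp]
    exact ⟨by positivity, le_mul_of_one_le_left (by positivity) this⟩
  set q : ℕ → X := fun k => (fun p => w p y δ)^[k] x
  have hsucc : ∀ k, q (k + 1) = w (q k) y δ := fun k => Function.iterate_succ_apply' _ k x
  have hy : ∀ k ≤ N, dist (q k) y = (N - k) * δ := by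
    intro k hk
    induction k with
    | zero => rw [Nat.cast_zero, sub_zero, mul_div_cancel₀ _ (by positivity)]; rfl
    | succ k ih =>
      rw [hsucc, (hw _ _ _ (hmem _ k (by omega) (ih (by omega)))).2, ih (by omega)]
      push_cast
      ring
  refine ⟨q, rfl, fun k hk => ?_, hy⟩
  rw [hsucc]
  exact (hw _ _ _ (hmem _ k hk (hy k hk.le))).1

end Chain

lemma dist_natFloor_div_mul_le {s δ : ℝ} (hs : 0 ≤ s) (hδ : 0 < δ) :
    dist ((⌊s / δ⌋₊ : ℝ) * δ) s ≤ δ := by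
  have h₁ : (⌊s / δ⌋₊ : ℝ) * δ ≤ s :=
    (le_div_iff₀ hδ).1 (Nat.floor_le (by positivity))
  have h₂ : s < (⌊s / δ⌋₊ + 1 : ℝ) * δ := (div_lt_iff₀ hδ).1 (Nat.lt_floor_add_one _)
  rw [Real.dist_eq, abs_le]
  constructor <;> linarith

section Geodesic

variable {X : Type*} [MetricSpace X]

lemma exists_approx_geodesic
    (hseg : ∀ x y : X, ∀ r ∈ Icc 0 (dist x y),
      ∃ z, dist x z = r ∧ dist z y = dist x y - r)
    (x y : X) {N : ℕ} (hN : 0 < N) :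
    ∃ γ : ℝ → X, γ 0 = x ∧ γ (dist x y) = y ∧
      ∀ s ∈ Icc 0 (dist x y), ∀ t ∈ Icc 0 (dist x y),
        dist (dist (γ s) (γ t)) |s - t| ≤ 2 * (dist x y / N) := by
  rcases (dist_nonneg (x := x) (y := y)).eq_or_lt with hd | hd
  · refine ⟨fun _ => x, rfl, dist_eq_zero.1 hd.symm, fun s hs t ht => ?_⟩
    rw [← hd] at hs ht
    simp [le_antisymm hs.2 hs.1, le_antisymm ht.2 ht.1, ← hd]
  obtain ⟨q, hq₀, hstep, hy⟩ := exists_chain_of_forall_dist_eq_sub hseg x y hN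
  set δ := dist x y / N
  have hδ : 0 < δ := by positivity
  have hδN : dist x y / δ = N := div_div_cancel₀ hd.ne'
  have hidx : ∀ s ∈ Icc 0 (dist x y), ⌊s / δ⌋₊ ≤ N := fun s hs =>
    Nat.floor_le_of_le ((div_le_div_of_nonneg_right hs.2 hδ.le).trans_eq hδN)
  refine ⟨fun s => q ⌊s / δ⌋₊, by simpa using hq₀, ?_, fun s hs t ht => ?_⟩
  · simp only [hδN, Nat.floor_natCast]
    exact dist_eq_zero.1 (by simpa using hy N le_rfl)
  · rw [dist_eq_abs_sub_mul_of_dist_succ_eq hstep hy (hidx s hs) (hidx t ht)]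
    calc dist (|(⌊s / δ⌋₊ : ℝ) - ⌊t / δ⌋₊| * δ) |s - t|
        = dist |(⌊s / δ⌋₊ : ℝ) * δ - ⌊t / δ⌋₊ * δ| |s - t| := by
          rw [← sub_mul, abs_mul, abs_of_pos hδ]
      _ ≤ dist ((⌊s / δ⌋₊ : ℝ) * δ - ⌊t / δ⌋₊ * δ) (s - t) :=
          abs_abs_sub_abs_le_abs_sub _ _
      _ ≤ dist ((⌊s / δ⌋₊ : ℝ) * δ) s + dist ((⌊t / δ⌋₊ : ℝ) * δ) t :=
          dist_sub_sub_le _ _ _ _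
      _ ≤ δ + δ :=
          add_le_add (dist_natFloor_div_mul_le hs.1 hδ) (dist_natFloor_div_mul_le ht.1 hδ)
      _ = 2 * δ := by ring

lemma exists_geodesic_of_approx [CompactSpace X] {x y : X} {d : ℝ} (γ : ℕ → ℝ → X)
    {ε : ℕ → ℝ} (hε : Tendsto ε atTop (𝓝 0))
    (h₀ : ∀ n, γ n 0 = x) (hd : ∀ n, γ n d = y)
    (hγ : ∀ n, ∀ s ∈ Icc 0 d, ∀ t ∈ Icc 0 d,
      dist (dist (γ n s) (γ n t)) |s - t| ≤ ε n) :
    ∃ g : ℝ → X, g 0 = x ∧ g d = y ∧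
      ∀ s ∈ Icc 0 d, ∀ t ∈ Icc 0 d, dist (g s) (g t) = |s - t| := by
  obtain ⟨g, hg⟩ := exists_clusterPt_of_compactSpace (map γ atTop)
  have hg' : MapClusterPt g atTop γ := hg
  refine ⟨g, (isClosed_eq (continuous_apply 0) continuous_const).mem_of_mapClusterPt hg'
    (.of_forall h₀), (isClosed_eq (continuous_apply d) continuous_const).mem_of_mapClusterPt hg'
    (.of_forall hd), fun s hs t ht => eq_of_forall_dist_le fun η hη => ?_⟩
  have hclosed : IsClosed {f : ℝ → X | dist (dist (f s) (f t)) |s - t| ≤ η} :=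
    isClosed_le (by fun_prop) continuous_const
  exact hclosed.mem_of_mapClusterPt hg'
    ((hε.eventually (ge_mem_nhds hη)).mono fun n hn => (hγ n s hs t ht).trans hn)

end Geodesic

theorem stmt_10_general {X : Type*} [MetricSpace X] [CompactSpace X]
    [MeasurableSpace X]
    (μ : Measure X)
    (hopen : ∀ U : Set X, IsOpen U → U.Nonempty → 0 < μ U)
    (hfin : μ Set.univ < ⊤)
    (hmid : ∀ᵐ p ∂(μ.prod (μ.prod (volume.restrict (Set.Icc (0:ℝ) 1)))),
      ∃ z : X, dist p.1 z = p.2.2 * dist p.1 p.2.1 ∧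
        dist z p.2.1 = dist p.1 p.2.1 - p.2.2 * dist p.1 p.2.1) :
    ∀ x y : X, ∃ γ : ℝ → X, γ 0 = x ∧ γ (dist x y) = y ∧
      ∀ s ∈ Set.Icc (0:ℝ) (dist x y), ∀ t ∈ Set.Icc (0:ℝ) (dist x y),
        dist (γ s) (γ t) = |s - t| := by
  have : IsFiniteMeasure μ := ⟨hfin⟩
  have : μ.IsOpenPosMeasure := ⟨fun U hU hne => (hopen U hU hne).ne'⟩
  have hseg := exists_dist_eq_sub_of_forall_mul (exists_dist_eq_mul_of_ae μ hmid)
  intro x y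
  choose γ hγ₀ hγd hγ using fun n : ℕ => exists_approx_geodesic hseg x y n.succ_pos
  refine exists_geodesic_of_approx γ ?_ hγ₀ hγd hγ
  simpa using ((tendsto_const_div_atTop_nhds_zero_nat (dist x y)).comp
    (tendsto_add_atTop_nat 1)).const_mul 2

/-- A compact metric measure space with a good measure in which almost every pair of
points admits approximate midpoints at every random fraction of the distance is a
geodesic metric space. -/
theorem stmt_10 {X : Type*} [MetricSpace X] [CompactSpace X]
    [MeasurableSpace X] [BorelSpace X]
    (μ : Measure X)
    (hatoms : ∀ x : X, μ {x} = 0)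
    (hopen : ∀ U : Set X, IsOpen U → U.Nonempty → 0 < μ U)
    (hfin : μ Set.univ < ⊤) (hpos : 0 < μ Set.univ)
    (hmid : ∀ᵐ p ∂(μ.prod (μ.prod (volume.restrict (Set.Icc (0:ℝ) 1)))),
      ∃ z : X, dist p.1 z = p.2.2 * dist p.1 p.2.1 ∧
        dist z p.2.1 = dist p.1 p.2.1 - p.2.2 * dist p.1 p.2.1) :
    ∀ x y : X, ∃ γ : ℝ → X, γ 0 = x ∧ γ (dist x y) = y ∧
      ∀ s ∈ Set.Icc (0:ℝ) (dist x y), ∀ t ∈ Set.Icc (0:ℝ) (dist x y),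
        dist (γ s) (γ t) = |s - t| :=
  stmt_10_general μ hopen hfin hmid
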